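/- arXiv:2505.12003 — 4 statements merged into one kernel-verified Lean document; each statement's English description precedes it below -/
import Mathlib

section
/- Let M ∈ ℝ^{h×h} be a symmetric matrix with all eigenvalues in the interval [0,1]. Then there exist k ∈ ℕ and W ∈ ℝ^{k×h} with spectral norm ‖W‖₂ ≤ 1 such that Mx = x − 2 Wᵀ ReLU(Wx) for all x ∈ ℝ^h, where ReLU(t) = max{t,0} is applied entrywise. Consequently the linear map x ↦ Mx belongs to E_{h,σ} with σ = ReLU. -/
open scoped BigOperators

noncomputable section

def relu (t : ℝ) : ℝ := max t 0

def entrywise {n : ℕ} (σ : ℝ → ℝ) (x : EuclideanSpace ℝ (Fin n)) : EuclideanSpace ℝ (Fin n) :=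
  WithLp.toLp 2 (fun i => σ (x i))

def matVec {k h : ℕ} (W : Matrix (Fin k) (Fin h) ℝ) (x : EuclideanSpace ℝ (Fin h)) :
    EuclideanSpace ℝ (Fin k) :=
  Matrix.toEuclideanLin W x

/-- Spectral norm of a real matrix, as the operator norm between Euclidean spaces. -/
def specNorm {k h : ℕ} (W : Matrix (Fin k) (Fin h) ℝ) : ℝ :=
  ‖LinearMap.toContinuousLinearMap (Matrix.toEuclideanLin W)‖

/-- Membership in `E_{h,σ}` with `σ = ReLU`. -/
def IsEulerStep {h : ℕ} (Φ : EuclideanSpace ℝ (Fin h) → EuclideanSpace ℝ (Fin h)) : Prop :=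
  ∃ (k : ℕ) (W : Matrix (Fin k) (Fin h) ℝ) (b : EuclideanSpace ℝ (Fin k)) (τ : ℝ),
    0 ≤ τ ∧ τ ≤ 2 ∧ specNorm W ≤ 1 ∧
    ∀ x, Φ x = x - τ • matVec W.transpose (entrywise relu (matVec W x + b))

def compChain {α : Type*} : (L : ℕ) → (Fin L → α → α) → α → α
  | 0, _, x => x
  | L + 1, Φ, x => Φ (Fin.last L) (compChain L (fun i => Φ i.castSucc) x)

/-- Membership in `G_{d,σ}(X,ℝ)` with `σ = ReLU`. -/
def InG {d : ℕ} (X : Set (EuclideanSpace ℝ (Fin d))) (g : EuclideanSpace ℝ (Fin d) → ℝ) : Prop :=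
  LipschitzOnWith 1 g X ∧
  ∃ (h L : ℕ) (Qhat : Matrix (Fin h) (Fin d) ℝ) (qhat : EuclideanSpace ℝ (Fin h))
    (Φ : Fin L → (EuclideanSpace ℝ (Fin h) → EuclideanSpace ℝ (Fin h)))
    (v : EuclideanSpace ℝ (Fin h)),
    (∀ ℓ, IsEulerStep (Φ ℓ)) ∧ ‖v‖ = 1 ∧
    ∀ x ∈ X, g x = ∑ i, v i * compChain L Φ (matVec Qhat x + qhat) i

def concatE {h₁ h₂ : ℕ} (u : EuclideanSpace ℝ (Fin h₁)) (v : EuclideanSpace ℝ (Fin h₂)) :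
    EuclideanSpace ℝ (Fin (h₁ + h₂)) :=
  WithLp.toLp 2 (Fin.append (fun i => u i) (fun i => v i))

/-- The residual blocks in `Ẽ_{h,σ}`: `(max{x₁,x₂}, min{x₁,x₂}, x₃, Φ'(x₄,…,x_{h+3}))`. -/
def tildeLayer {h : ℕ} (Φ' : EuclideanSpace ℝ (Fin h) → EuclideanSpace ℝ (Fin h))
    (x : EuclideanSpace ℝ (Fin (h + 3))) : EuclideanSpace ℝ (Fin (h + 3)) :=
  WithLp.toLp 2 (fun j =>
    if _h0 : (j : ℕ) = 0 then max (x ⟨0, by omega⟩) (x ⟨1, by omega⟩)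
    else if _h1 : (j : ℕ) = 1 then min (x ⟨0, by omega⟩) (x ⟨1, by omega⟩)
    else if _h2 : (j : ℕ) = 2 then x ⟨2, by omega⟩
    else Φ' (WithLp.toLp 2 (fun i => x ⟨(i : ℕ) + 3, by have := i.isLt; omega⟩))
      ⟨(j : ℕ) - 3, by have := j.isLt; omega⟩)

/-- Membership in `Ẽ_{h,σ}` with `σ = ReLU`. -/
def IsTildeLayer {h : ℕ} (Φ : EuclideanSpace ℝ (Fin (h + 3)) → EuclideanSpace ℝ (Fin (h + 3))) :
    Prop :=
  ∃ Φ', IsEulerStep Φ' ∧ ∀ x, Φ x = tildeLayer Φ' x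

def emb0 {n : ℕ} : Fin 1 → Fin (n + 3) := fun _ => ⟨0, by omega⟩
def emb1 {n : ℕ} : Fin 1 → Fin (n + 3) := fun _ => ⟨1, by omega⟩
def emb2 {n : ℕ} : Fin 1 → Fin (n + 3) := fun _ => ⟨2, by omega⟩
def embT {n : ℕ} : Fin n → Fin (n + 3) := fun i => ⟨(i : ℕ) + 3, by have := i.isLt; omega⟩

/-- Membership in `R_{d,m}` for `m = (1,1,1,n)`: each block row of the matrix has spectral
norm at most `1`. -/
def memRm {d n : ℕ} (Q : Matrix (Fin (n + 3)) (Fin d) ℝ) : Prop :=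
  specNorm (Q.submatrix emb0 id) ≤ 1 ∧ specNorm (Q.submatrix emb1 id) ≤ 1 ∧
    specNorm (Q.submatrix emb2 id) ≤ 1 ∧ specNorm (Q.submatrix embT id) ≤ 1

def rowBlockSum {n r : ℕ} (A : Matrix (Fin (n + 3)) (Fin (n + 3)) ℝ)
    (e : Fin r → Fin (n + 3)) : ℝ :=
  specNorm (A.submatrix e emb0) + specNorm (A.submatrix e emb1) +
    specNorm (A.submatrix e emb2) + specNorm (A.submatrix e embT)

/-- Membership in `L_m` for `m = (1,1,1,n)`: for each block row, the sum of the spectral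
norms of the blocks is at most `1`. -/
def memLm {n : ℕ} (A : Matrix (Fin (n + 3)) (Fin (n + 3)) ℝ) : Prop :=
  rowBlockSum A emb0 ≤ 1 ∧ rowBlockSum A emb1 ≤ 1 ∧
    rowBlockSum A emb2 ≤ 1 ∧ rowBlockSum A embT ≤ 1

/-- `Φ_{L+1} ∘ A_L ∘ ⋯ ∘ Φ₂ ∘ A₁ ∘ Φ₁`, the alternating composition. -/
def altChain {α : Type*} : (L : ℕ) → (Fin (L + 1) → α → α) → (Fin L → α → α) → α → α
  | 0, Φ, _, x => Φ 0 x
  | L + 1, Φ, A, x =>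
      Φ (Fin.last (L + 1)) (A (Fin.last L)
        (altChain L (fun i => Φ i.castSucc) (fun i => A i.castSucc) x))

/-- Membership in the fixed-width class `tilde-G_{d,σ,n+3}(X,ℝ)` with `σ = ReLU`. -/
def InTildeG {d n : ℕ} (X : Set (EuclideanSpace ℝ (Fin d)))
    (g : EuclideanSpace ℝ (Fin d) → ℝ) : Prop :=
  ∃ (L : ℕ) (Qhat : Matrix (Fin (n + 3)) (Fin d) ℝ) (qhat : EuclideanSpace ℝ (Fin (n + 3)))
    (Φ : Fin (L + 1) → (EuclideanSpace ℝ (Fin (n + 3)) → EuclideanSpace ℝ (Fin (n + 3))))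
    (Ahat : Fin L → Matrix (Fin (n + 3)) (Fin (n + 3)) ℝ)
    (ahat : Fin L → EuclideanSpace ℝ (Fin (n + 3)))
    (v : EuclideanSpace ℝ (Fin (n + 3))),
    memRm Qhat ∧ (∀ ℓ, IsTildeLayer (Φ ℓ)) ∧ (∀ ℓ, memLm (Ahat ℓ)) ∧ (∑ i, |v i|) ≤ 1 ∧
    ∀ x ∈ X,
      g x = ∑ i, v i *
        altChain L Φ (fun ℓ u => matVec (Ahat ℓ) u + ahat ℓ) (matVec Qhat x + qhat) i

end

/-!
Since `ReLU t - ReLU (-t) = t`, the stacked matrix `W = [A; -A]` satisfies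
`Wᵀ ReLU (W x) = AᵀA x` and `‖W x‖² = 2 ‖A x‖²`. The spectral hypothesis says `0 ≤ M ≤ 1` in the
Loewner order, so `(1 - M) / 2 = AᵀA` for some square `A`. Then `M = 1 - 2 AᵀA` is exactly
`x ↦ x - 2 Wᵀ ReLU (W x)`, and `‖W‖₂ ≤ 1` because `2 ‖A x‖² = ‖x‖² - xᵀMx ≤ ‖x‖²`.
-/

open Matrix
open scoped MatrixOrder

lemma relu_sub_relu_neg (t : ℝ) : relu t - relu (-t) = t := by
  simp only [relu]
  rcases le_total t 0 with ht | ht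
  · rw [max_eq_right ht, max_eq_left (neg_nonneg.2 ht)]; ring
  · rw [max_eq_left ht, max_eq_right (neg_nonpos.2 ht)]; ring

lemma ofLp_matVec {k h : ℕ} (W : Matrix (Fin k) (Fin h) ℝ) (x : EuclideanSpace ℝ (Fin h)) :
    (matVec W x).ofLp = W *ᵥ x.ofLp := by
  simp [matVec, toLpLin_apply]

lemma ofLp_entrywise {n : ℕ} (σ : ℝ → ℝ) (x : EuclideanSpace ℝ (Fin n)) :
    (entrywise σ x).ofLp = σ ∘ x.ofLp := rfl

lemma EuclideanSpace.norm_sq_eq_dotProduct {n : ℕ} (x : EuclideanSpace ℝ (Fin n)) :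
    ‖x‖ ^ 2 = x.ofLp ⬝ᵥ x.ofLp := by
  rw [EuclideanSpace.real_norm_sq_eq]
  simp only [dotProduct, sq]

lemma specNorm_le_one_of_dotProduct_le {k h : ℕ} (W : Matrix (Fin k) (Fin h) ℝ)
    (hW : ∀ v, (W *ᵥ v) ⬝ᵥ (W *ᵥ v) ≤ v ⬝ᵥ v) : specNorm W ≤ 1 := by
  refine ContinuousLinearMap.opNorm_le_bound _ zero_le_one fun x => ?_
  rw [one_mul, LinearMap.coe_toContinuousLinearMap', ← matVec.eq_def]
  refine le_of_sq_le_sq ?_ (norm_nonneg x)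
  rw [EuclideanSpace.norm_sq_eq_dotProduct, EuclideanSpace.norm_sq_eq_dotProduct, ofLp_matVec]
  exact hW x.ofLp

section stackNeg

variable {k : ℕ} {n : Type*}

def stackNeg (A : Matrix (Fin k) n ℝ) : Matrix (Fin (k + k)) n ℝ :=
  Matrix.of (Fin.append (fun i => A i) (fun i => -A i))

lemma stackNeg_mulVec [Fintype n] (A : Matrix (Fin k) n ℝ) (v : n → ℝ) :
    stackNeg A *ᵥ v = Fin.append (A *ᵥ v) (-(A *ᵥ v)) := by
  funext j
  refine Fin.addCases (fun i => ?_) (fun i => ?_) j <;>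
    simp only [stackNeg, mulVec, of_apply, Fin.append_left, Fin.append_right, Pi.neg_apply]
  simp [dotProduct]

lemma stackNeg_transpose_mulVec (A : Matrix (Fin k) n ℝ) (y : Fin (k + k) → ℝ) :
    (stackNeg A)ᵀ *ᵥ y = Aᵀ *ᵥ (y ∘ Fin.castAdd k) - Aᵀ *ᵥ (y ∘ Fin.natAdd k) := by
  funext i
  simp only [stackNeg, mulVec, dotProduct, transpose_apply, of_apply, Fin.sum_univ_add,
    Fin.append_left, Fin.append_right, Pi.neg_apply, Pi.sub_apply, Function.comp_apply, neg_mul,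
    Finset.sum_neg_distrib, sub_eq_add_neg]

lemma stackNeg_mulVec_dotProduct_self [Fintype n] (A : Matrix (Fin k) n ℝ) (v : n → ℝ) :
    (stackNeg A *ᵥ v) ⬝ᵥ (stackNeg A *ᵥ v) = 2 * ((A *ᵥ v) ⬝ᵥ (A *ᵥ v)) := by
  simp only [stackNeg_mulVec, dotProduct, Fin.sum_univ_add, Fin.append_left, Fin.append_right,
    Pi.neg_apply, neg_mul_neg, two_mul]

lemma stackNeg_transpose_mulVec_relu [Fintype n] (A : Matrix (Fin k) n ℝ) (v : n → ℝ) :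
    (stackNeg A)ᵀ *ᵥ (relu ∘ (stackNeg A *ᵥ v)) = Aᵀ *ᵥ (A *ᵥ v) := by
  rw [stackNeg_transpose_mulVec, ← mulVec_sub, stackNeg_mulVec]
  congr 1
  funext j
  simp only [Pi.sub_apply, Function.comp_apply, Fin.append_left, Fin.append_right, Pi.neg_apply,
    relu_sub_relu_neg]

end stackNeg

lemma matVec_one_sub_two_smul_transpose_mul {k h : ℕ} (A : Matrix (Fin k) (Fin h) ℝ)
    (x : EuclideanSpace ℝ (Fin h)) :
    matVec (1 - (2 : ℝ) • (Aᵀ * A)) x =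
      x - (2 : ℝ) • matVec (stackNeg A)ᵀ (entrywise relu (matVec (stackNeg A) x)) := by
  apply WithLp.ofLp_injective
  simp only [ofLp_matVec, WithLp.ofLp_sub, WithLp.ofLp_smul, ofLp_entrywise,
    stackNeg_transpose_mulVec_relu, sub_mulVec, one_mulVec, smul_mulVec, mulVec_mulVec]

lemma specNorm_stackNeg_le_one {k h : ℕ} (A : Matrix (Fin k) (Fin h) ℝ)
    (hA : (1 - (2 : ℝ) • (Aᵀ * A)).PosSemidef) : specNorm (stackNeg A) ≤ 1 := by
  refine specNorm_le_one_of_dotProduct_le _ fun v => ?_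
  have hv := hA.dotProduct_mulVec_nonneg v
  rw [stackNeg_mulVec_dotProduct_self]
  have hAA : v ⬝ᵥ ((Aᵀ * A) *ᵥ v) = (A *ᵥ v) ⬝ᵥ (A *ᵥ v) := by
    rw [← mulVec_mulVec, dotProduct_mulVec, vecMul_transpose]
  simp only [star_trivial, sub_mulVec, one_mulVec, smul_mulVec, dotProduct_sub, dotProduct_smul,
    hAA, smul_eq_mul] at hv
  linarith

lemma exists_eq_one_sub_two_smul_transpose_mul {n : Type*} [Fintype n] [DecidableEq n]
    {M : Matrix n n ℝ} (hM : M ≤ 1) : ∃ A : Matrix n n ℝ, M = 1 - (2 : ℝ) • (Aᵀ * A) := by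
  have h : 0 ≤ (2⁻¹ : ℝ) • (1 - M) := smul_nonneg (by norm_num) (sub_nonneg.2 hM)
  obtain ⟨A, hA⟩ := CStarAlgebra.nonneg_iff_eq_star_mul_self.1 h
  refine ⟨A, ?_⟩
  rw [star_eq_conjTranspose, conjTranspose_eq_transpose_of_trivial] at hA
  rw [← hA, smul_smul]
  norm_num

/-- A symmetric matrix with all eigenvalues in `[0,1]` can be written as
`x ↦ x - 2 Wᵀ ReLU(Wx)` with `‖W‖₂ ≤ 1`; consequently it belongs to `E_{h,ReLU}`. -/
theorem stmt2 (h : ℕ) (M : Matrix (Fin h) (Fin h) ℝ) (hsymm : M.IsSymm)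
    (hspec : ∀ μ ∈ spectrum ℝ M, μ ∈ Set.Icc (0 : ℝ) 1) :
    (∃ (k : ℕ) (W : Matrix (Fin k) (Fin h) ℝ), specNorm W ≤ 1 ∧
      ∀ x : EuclideanSpace ℝ (Fin h),
        matVec M x = x - (2 : ℝ) • matVec W.transpose (entrywise relu (matVec W x))) ∧
    IsEulerStep (fun x => matVec M x) := by
  have hM : IsSelfAdjoint M := hsymm
  have hM0 : 0 ≤ M :=
    (StarOrderedRing.nonneg_iff_spectrum_nonneg M hM).2 fun μ hμ => (hspec μ hμ).1
  have hM1 : M ≤ 1 := (CFC.le_one_iff M hM).2 fun μ hμ => (hspec μ hμ).2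
  obtain ⟨A, rfl⟩ := exists_eq_one_sub_two_smul_transpose_mul hM1
  have hW := specNorm_stackNeg_le_one A (nonneg_iff_posSemidef.1 hM0)
  have hrepr := matVec_one_sub_two_smul_transpose_mul A
  refine ⟨⟨h + h, stackNeg A, hW, hrepr⟩, h + h, stackNeg A, 0, 2, zero_le_two, le_rfl, hW, ?_⟩
  simpa only [add_zero] using hrepr
end

section
/- Let d ∈ ℕ, X ⊆ ℝ^d, and σ = ReLU. If f, g ∈ G_{d,σ}(X,ℝ), then the functions h, k : X → ℝ defined by h(x) = max{f(x), g(x)} and k(x) = min{f(x), g(x)} also belong to G_{d,σ}(X,ℝ); that is, G_{d,σ}(X,ℝ) is a lattice. -/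
open scoped BigOperators

/-!
Run the two networks side by side on the concatenated input `(Q₁ x + q₁, Q₂ x + q₂)`: an Euler
step of one block is an Euler step of the wide space, pulled back along the block projection,
which has spectral norm `≤ 1`. For unit readouts `a, b` with values `A, B`, one more Euler step
`z ↦ z - 2 relu ⟪w, z⟫ w` with `w = (-a, b) / √2` leaves the readout `A + relu (B - A) = max A B`
along `(a, 0)` and `B - relu (B - A) = min A B` along `(0, b)`. Lipschitz constants are preserved
by `max` and `min`.
-/

open scoped InnerProductSpace Matrix Matrix.Norms.L2Operator

local notation "ℝ^" n:max => EuclideanSpace ℝ (Fin n)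

protected lemma LipschitzOnWith.max {α : Type*} [PseudoEMetricSpace α] {f g : α → ℝ} {s : Set α}
    {Kf Kg : NNReal} (hf : LipschitzOnWith Kf f s) (hg : LipschitzOnWith Kg g s) :
    LipschitzOnWith (max Kf Kg) (fun x => max (f x) (g x)) s :=
  lipschitzOnWith_iff_restrict.2 <|
    (lipschitzOnWith_iff_restrict.1 hf).max (lipschitzOnWith_iff_restrict.1 hg)

protected lemma LipschitzOnWith.min {α : Type*} [PseudoEMetricSpace α] {f g : α → ℝ} {s : Set α}
    {Kf Kg : NNReal} (hf : LipschitzOnWith Kf f s) (hg : LipschitzOnWith Kg g s) :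
    LipschitzOnWith (max Kf Kg) (fun x => min (f x) (g x)) s :=
  lipschitzOnWith_iff_restrict.2 <|
    (lipschitzOnWith_iff_restrict.1 hf).min (lipschitzOnWith_iff_restrict.1 hg)

lemma compChain_add {α : Type*} (L₁ : ℕ) :
    ∀ (L₂ : ℕ) (Φ : Fin (L₁ + L₂) → α → α) (x : α),
      compChain (L₁ + L₂) Φ x =
        compChain L₂ (fun i => Φ (Fin.natAdd L₁ i))
          (compChain L₁ (fun i => Φ (Fin.castAdd L₂ i)) x)
  | 0, _, _ => rfl
  | L₂ + 1, Φ, x => congrArg (Φ (Fin.last _)) (compChain_add L₁ L₂ (fun i => Φ i.castSucc) x)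

lemma compChain_semiconj {α β : Type*} {L : ℕ} {F : Fin L → β → β} {G : Fin L → α → α}
    {e : α → β} (h : ∀ i x, F i (e x) = e (G i x)) (x : α) :
    compChain L F (e x) = e (compChain L G x) := by
  induction L with
  | zero => rfl
  | succ L ih => simp only [compChain, ih fun i => h i.castSucc, h]

lemma sum_mul_eq_inner {n : ℕ} (v y : ℝ^n) : ∑ i, v i * y i = ⟪v, y⟫_ℝ := by
  simp [PiLp.inner_apply, mul_comm]

section Matrix

variable {k m n : ℕ}

lemma specNorm_mul_le (A : Matrix (Fin k) (Fin m) ℝ) (B : Matrix (Fin m) (Fin n) ℝ) :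
    specNorm (A * B) ≤ specNorm A * specNorm B :=
  Matrix.l2_opNorm_mul A B

lemma specNorm_le_one {W : Matrix (Fin k) (Fin n) ℝ} (hW : ∀ x, ‖matVec W x‖ ≤ ‖x‖) :
    specNorm W ≤ 1 :=
  ContinuousLinearMap.opNorm_le_bound _ zero_le_one fun x => by rw [one_mul]; exact hW x

end Matrix

noncomputable def liftAlong {h m : ℕ} (P : Matrix (Fin h) (Fin m) ℝ) (Φ : ℝ^h → ℝ^h) (z : ℝ^m) :
    ℝ^m :=
  z - matVec Pᵀ (matVec P z - Φ (matVec P z))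

lemma IsEulerStep.liftAlong {h m : ℕ} {Φ : ℝ^h → ℝ^h} (hΦ : IsEulerStep Φ)
    {P : Matrix (Fin h) (Fin m) ℝ} (hP : specNorm P ≤ 1) : IsEulerStep (liftAlong P Φ) := by
  obtain ⟨k, W, b, τ, hτ0, hτ2, hW, hΦ⟩ := hΦ
  refine ⟨k, W * P, b, τ, hτ0, hτ2,
    (specNorm_mul_le W P).trans (mul_le_one₀ hW (norm_nonneg _) hP), fun z => ?_⟩
  simp [_root_.liftAlong, hΦ, Matrix.transpose_mul, matVec, map_smul]

section Blocks

variable {h₁ h₂ : ℕ}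

@[simp] lemma concatE_castAdd (u : ℝ^h₁) (v : ℝ^h₂) (i : Fin h₁) :
    concatE u v (Fin.castAdd h₂ i) = u i := by
  simp [concatE]

@[simp] lemma concatE_natAdd (u : ℝ^h₁) (v : ℝ^h₂) (i : Fin h₂) :
    concatE u v (Fin.natAdd h₁ i) = v i := by
  simp [concatE]

lemma exists_concatE_eq (z : ℝ^(h₁ + h₂)) : ∃ u v, concatE u v = z :=
  ⟨WithLp.toLp 2 fun i => z (Fin.castAdd h₂ i), WithLp.toLp 2 fun i => z (Fin.natAdd h₁ i), by
    ext j; refine Fin.addCases (fun i => ?_) (fun i => ?_) j <;> simp⟩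

lemma concatE_add (a c : ℝ^h₁) (b d : ℝ^h₂) :
    concatE a b + concatE c d = concatE (a + c) (b + d) := by
  ext j; refine Fin.addCases (fun i => ?_) (fun i => ?_) j <;> simp

lemma concatE_sub (a c : ℝ^h₁) (b d : ℝ^h₂) :
    concatE a b - concatE c d = concatE (a - c) (b - d) := by
  ext j; refine Fin.addCases (fun i => ?_) (fun i => ?_) j <;> simp

lemma inner_concatE (a c : ℝ^h₁) (b d : ℝ^h₂) :
    ⟪concatE a b, concatE c d⟫_ℝ = ⟪a, c⟫_ℝ + ⟪b, d⟫_ℝ := by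
  simp [PiLp.inner_apply, Fin.sum_univ_add]

lemma norm_concatE (u : ℝ^h₁) (v : ℝ^h₂) : ‖concatE u v‖ = √(‖u‖ ^ 2 + ‖v‖ ^ 2) := by
  rw [norm_eq_sqrt_real_inner, inner_concatE, real_inner_self_eq_norm_sq,
    real_inner_self_eq_norm_sq]

def stackRows {d : ℕ} (Q₁ : Matrix (Fin h₁) (Fin d) ℝ) (Q₂ : Matrix (Fin h₂) (Fin d) ℝ) :
    Matrix (Fin (h₁ + h₂)) (Fin d) ℝ :=
  Matrix.of (Fin.append (fun i => Q₁ i) (fun i => Q₂ i))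

lemma matVec_stackRows {d : ℕ} (Q₁ : Matrix (Fin h₁) (Fin d) ℝ) (Q₂ : Matrix (Fin h₂) (Fin d) ℝ)
    (x : ℝ^d) : matVec (stackRows Q₁ Q₂) x = concatE (matVec Q₁ x) (matVec Q₂ x) := by
  ext j
  refine Fin.addCases (fun i => ?_) (fun i => ?_) j <;>
    simp [stackRows, matVec, Matrix.toLpLin_apply, Matrix.mulVec]

def blockFst : Matrix (Fin h₁) (Fin (h₁ + h₂)) ℝ :=
  Matrix.of fun i => Fin.append (Pi.single i 1) 0

def blockSnd : Matrix (Fin h₂) (Fin (h₁ + h₂)) ℝ :=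
  Matrix.of fun i => Fin.append 0 (Pi.single i 1)

lemma matVec_blockFst (u : ℝ^h₁) (v : ℝ^h₂) : matVec blockFst (concatE u v) = u := by
  ext i
  simp [matVec, blockFst, Matrix.toLpLin_apply, Matrix.mulVec, dotProduct, Fin.sum_univ_add,
    Pi.single_apply]

lemma matVec_blockSnd (u : ℝ^h₁) (v : ℝ^h₂) : matVec blockSnd (concatE u v) = v := by
  ext i
  simp [matVec, blockSnd, Matrix.toLpLin_apply, Matrix.mulVec, dotProduct, Fin.sum_univ_add,
    Pi.single_apply]

lemma matVec_transpose_blockFst (u : ℝ^h₁) : matVec (blockFst (h₂ := h₂))ᵀ u = concatE u 0 := by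
  ext j
  refine Fin.addCases (fun i => ?_) (fun i => ?_) j <;>
    simp [matVec, blockFst, Matrix.toLpLin_apply, Matrix.mulVec, dotProduct, Pi.single_apply]

lemma matVec_transpose_blockSnd (v : ℝ^h₂) : matVec (blockSnd (h₁ := h₁))ᵀ v = concatE 0 v := by
  ext j
  refine Fin.addCases (fun i => ?_) (fun i => ?_) j <;>
    simp [matVec, blockSnd, Matrix.toLpLin_apply, Matrix.mulVec, dotProduct, Pi.single_apply]

lemma specNorm_blockFst_le : specNorm (blockFst (h₁ := h₁) (h₂ := h₂)) ≤ 1 := by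
  refine specNorm_le_one fun z => ?_
  obtain ⟨u, v, rfl⟩ := exists_concatE_eq z
  rw [matVec_blockFst, norm_concatE]
  exact Real.le_sqrt_of_sq_le (by nlinarith [sq_nonneg ‖v‖])

lemma specNorm_blockSnd_le : specNorm (blockSnd (h₁ := h₁) (h₂ := h₂)) ≤ 1 := by
  refine specNorm_le_one fun z => ?_
  obtain ⟨u, v, rfl⟩ := exists_concatE_eq z
  rw [matVec_blockSnd, norm_concatE]
  exact Real.le_sqrt_of_sq_le (by nlinarith [sq_nonneg ‖u‖])

lemma liftAlong_blockFst (Φ : ℝ^h₁ → ℝ^h₁) (u : ℝ^h₁) (v : ℝ^h₂) :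
    liftAlong blockFst Φ (concatE u v) = concatE (Φ u) v := by
  simp [liftAlong, matVec_blockFst, matVec_transpose_blockFst, concatE_sub]

lemma liftAlong_blockSnd (Φ : ℝ^h₂ → ℝ^h₂) (u : ℝ^h₁) (v : ℝ^h₂) :
    liftAlong blockSnd Φ (concatE u v) = concatE u (Φ v) := by
  simp [liftAlong, matVec_blockSnd, matVec_transpose_blockSnd, concatE_sub]

end Blocks

def IsResNet {h : ℕ} (N : ℝ^h → ℝ^h) : Prop :=
  ∃ (L : ℕ) (Φ : Fin L → ℝ^h → ℝ^h), (∀ ℓ, IsEulerStep (Φ ℓ)) ∧ N = compChain L Φ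

lemma IsEulerStep.isResNet {h : ℕ} {Φ : ℝ^h → ℝ^h} (hΦ : IsEulerStep Φ) : IsResNet Φ :=
  ⟨1, fun _ => Φ, fun _ => hΦ, rfl⟩

lemma IsResNet.comp {h : ℕ} {N₁ N₂ : ℝ^h → ℝ^h} (hN₁ : IsResNet N₁) (hN₂ : IsResNet N₂) :
    IsResNet (N₂ ∘ N₁) := by
  obtain ⟨L₁, Φ₁, hΦ₁, rfl⟩ := hN₁
  obtain ⟨L₂, Φ₂, hΦ₂, rfl⟩ := hN₂
  refine ⟨L₁ + L₂, Fin.append Φ₁ Φ₂, Fin.addCases (by simpa using hΦ₁) (by simpa using hΦ₂), ?_⟩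
  funext x
  simp [compChain_add]

lemma IsResNet.exists_concatE {h₁ h₂ : ℕ} {N₁ : ℝ^h₁ → ℝ^h₁} {N₂ : ℝ^h₂ → ℝ^h₂}
    (hN₁ : IsResNet N₁) (hN₂ : IsResNet N₂) :
    ∃ N : ℝ^(h₁ + h₂) → ℝ^(h₁ + h₂),
      IsResNet N ∧ ∀ u v, N (concatE u v) = concatE (N₁ u) (N₂ v) := by
  obtain ⟨L₁, Φ₁, hΦ₁, rfl⟩ := hN₁
  obtain ⟨L₂, Φ₂, hΦ₂, rfl⟩ := hN₂
  refine ⟨compChain L₂ (fun ℓ => liftAlong blockSnd (Φ₂ ℓ)) ∘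
      compChain L₁ (fun ℓ => liftAlong blockFst (Φ₁ ℓ)),
    IsResNet.comp ⟨L₁, _, fun ℓ => (hΦ₁ ℓ).liftAlong specNorm_blockFst_le, rfl⟩
      ⟨L₂, _, fun ℓ => (hΦ₂ ℓ).liftAlong specNorm_blockSnd_le, rfl⟩, fun u v => ?_⟩
  rw [Function.comp_apply,
    compChain_semiconj (e := (concatE · v)) (fun ℓ u => liftAlong_blockFst (Φ₁ ℓ) u v),
    compChain_semiconj (e := concatE _) (fun ℓ v => liftAlong_blockSnd (Φ₂ ℓ) _ v)]

/-- For `‖w‖ = 1`, reflects the half-space `⟪w, z⟫ > 0` across the hyperplane `⟪w, z⟫ = 0`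
and fixes the other half. -/
noncomputable def foldStep {h : ℕ} (w z : ℝ^h) : ℝ^h :=
  z - (2 * relu ⟪w, z⟫_ℝ) • w

lemma inner_foldStep {h : ℕ} (w v z : ℝ^h) :
    ⟪v, foldStep w z⟫_ℝ = ⟪v, z⟫_ℝ - 2 * relu ⟪w, z⟫_ℝ * ⟪v, w⟫_ℝ := by
  rw [foldStep, inner_sub_right, real_inner_smul_right]

lemma isEulerStep_foldStep {h : ℕ} {w : ℝ^h} (hw : ‖w‖ ≤ 1) : IsEulerStep (foldStep w) := by
  let W : Matrix (Fin 1) (Fin h) ℝ := Matrix.replicateRow (Fin 1) w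
  have hW : ∀ z, matVec W z = WithLp.toLp 2 fun _ => ⟪w, z⟫_ℝ := fun z => by
    ext
    rw [← sum_mul_eq_inner]
    simp [W, matVec, Matrix.toLpLin_apply, Matrix.mulVec, dotProduct]
  have hWt : ∀ c : ℝ^1, matVec Wᵀ c = c 0 • w := fun c => by
    ext
    simp [W, matVec, Matrix.toLpLin_apply, Matrix.mulVec, dotProduct, mul_comm]
  refine ⟨1, W, 0, 2, zero_le_two, le_rfl, specNorm_le_one fun z => ?_, fun z => ?_⟩
  · rw [hW, EuclideanSpace.norm_eq (WithLp.toLp 2 _)]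
    simp only [Fin.sum_univ_one, Real.norm_eq_abs, sq_abs, Real.sqrt_sq_eq_abs]
    exact (abs_real_inner_le_norm w z).trans (mul_le_of_le_one_left (norm_nonneg _) hw)
  · rw [add_zero, hW, hWt, foldStep, mul_smul]
    rfl

lemma max_eq_add_relu_sub (s t : ℝ) : max s t = s + relu (t - s) := by
  rw [relu, ← max_add_add_left, add_sub_cancel, add_zero, max_comm]

lemma min_eq_sub_relu_sub (s t : ℝ) : min s t = t - relu (t - s) := by
  rw [relu, ← min_sub_sub_left, sub_sub_cancel, sub_zero]

lemma two_mul_relu_inv_sqrt_two_mul (t : ℝ) : 2 * relu ((√2)⁻¹ * t) * (√2)⁻¹ = relu t := by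
  have h2 : 2 * (√2)⁻¹ * (√2)⁻¹ = 1 := by
    rw [mul_assoc, ← mul_inv, Real.mul_self_sqrt zero_le_two, mul_inv_cancel₀ two_ne_zero]
  rw [mul_comm 2, mul_assoc, relu, relu, max_mul_of_nonneg _ _ (by positivity), zero_mul]
  congr 1
  linear_combination t * h2

section Sorting

variable {h₁ h₂ : ℕ} {a : ℝ^h₁} {b : ℝ^h₂}

noncomputable def sortDir (a : ℝ^h₁) (b : ℝ^h₂) : ℝ^(h₁ + h₂) :=
  (√2)⁻¹ • concatE (-a) b

lemma norm_sortDir (ha : ‖a‖ = 1) (hb : ‖b‖ = 1) : ‖sortDir a b‖ = 1 := by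
  rw [sortDir, norm_smul, norm_concatE, norm_neg, ha, hb]
  norm_num [abs_of_nonneg]

lemma inner_sortDir_concatE (x : ℝ^h₁) (y : ℝ^h₂) :
    ⟪sortDir a b, concatE x y⟫_ℝ = (√2)⁻¹ * (⟪b, y⟫_ℝ - ⟪a, x⟫_ℝ) := by
  rw [sortDir, real_inner_smul_left, inner_concatE, inner_neg_left]
  ring

lemma inner_foldStep_sortDir_fst (ha : ‖a‖ = 1) (x : ℝ^h₁) (y : ℝ^h₂) :
    ⟪concatE a 0, foldStep (sortDir a b) (concatE x y)⟫_ℝ = max ⟪a, x⟫_ℝ ⟪b, y⟫_ℝ := by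
  have hw : ⟪concatE a 0, sortDir a b⟫_ℝ = -(√2)⁻¹ := by
    rw [sortDir, real_inner_smul_right, inner_concatE, inner_neg_right,
      real_inner_self_eq_norm_sq, ha, inner_zero_left]
    ring
  rw [inner_foldStep, hw, inner_sortDir_concatE, inner_concatE, inner_zero_left, add_zero,
    max_eq_add_relu_sub]
  linear_combination two_mul_relu_inv_sqrt_two_mul (⟪b, y⟫_ℝ - ⟪a, x⟫_ℝ)

lemma inner_foldStep_sortDir_snd (hb : ‖b‖ = 1) (x : ℝ^h₁) (y : ℝ^h₂) :
    ⟪concatE 0 b, foldStep (sortDir a b) (concatE x y)⟫_ℝ = min ⟪a, x⟫_ℝ ⟪b, y⟫_ℝ := by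
  have hw : ⟪concatE 0 b, sortDir a b⟫_ℝ = (√2)⁻¹ := by
    rw [sortDir, real_inner_smul_right, inner_concatE, real_inner_self_eq_norm_sq, hb,
      inner_zero_left]
    ring
  rw [inner_foldStep, hw, inner_sortDir_concatE, inner_concatE, inner_zero_left, zero_add,
    min_eq_sub_relu_sub]
  linear_combination -two_mul_relu_inv_sqrt_two_mul (⟪b, y⟫_ℝ - ⟪a, x⟫_ℝ)

end Sorting

def IsResNetReadout {d : ℕ} (X : Set (ℝ^d)) (g : ℝ^d → ℝ) : Prop :=
  ∃ (h : ℕ) (Q : Matrix (Fin h) (Fin d) ℝ) (q : ℝ^h) (N : ℝ^h → ℝ^h) (v : ℝ^h),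
    IsResNet N ∧ ‖v‖ = 1 ∧ ∀ x ∈ X, g x = ⟪v, N (matVec Q x + q)⟫_ℝ

lemma inG_iff {d : ℕ} {X : Set (ℝ^d)} {g : ℝ^d → ℝ} :
    InG X g ↔ LipschitzOnWith 1 g X ∧ IsResNetReadout X g := by
  simp only [InG, IsResNetReadout, IsResNet, sum_mul_eq_inner]
  constructor
  · rintro ⟨hg, h, L, Q, q, Φ, v, hΦ, hv, hrepr⟩
    exact ⟨hg, h, Q, q, _, v, ⟨L, Φ, hΦ, rfl⟩, hv, hrepr⟩
  · rintro ⟨hg, h, Q, q, _, v, ⟨L, Φ, hΦ, rfl⟩, hv, hrepr⟩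
    exact ⟨hg, h, L, Q, q, Φ, v, hΦ, hv, hrepr⟩

lemma IsResNetReadout.max_min {d : ℕ} {X : Set (ℝ^d)} {f g : ℝ^d → ℝ}
    (hf : IsResNetReadout X f) (hg : IsResNetReadout X g) :
    IsResNetReadout X (fun x => max (f x) (g x)) ∧
      IsResNetReadout X (fun x => min (f x) (g x)) := by
  obtain ⟨h₁, Q₁, q₁, N₁, a, hN₁, ha, hf⟩ := hf
  obtain ⟨h₂, Q₂, q₂, N₂, b, hN₂, hb, hg⟩ := hg
  obtain ⟨N, hN, hNconcat⟩ := hN₁.exists_concatE hN₂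
  have hsort : IsResNet (foldStep (sortDir a b) ∘ N) :=
    hN.comp (isEulerStep_foldStep (norm_sortDir ha hb).le).isResNet
  have hin : ∀ x, matVec (stackRows Q₁ Q₂) x + concatE q₁ q₂ =
      concatE (matVec Q₁ x + q₁) (matVec Q₂ x + q₂) :=
    fun x => by rw [matVec_stackRows, concatE_add]
  refine ⟨⟨_, stackRows Q₁ Q₂, concatE q₁ q₂, _, concatE a 0, hsort, by simp [norm_concatE, ha],
      fun x hx => ?_⟩,
    ⟨_, stackRows Q₁ Q₂, concatE q₁ q₂, _, concatE 0 b, hsort, by simp [norm_concatE, hb],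
      fun x hx => ?_⟩⟩
  · rw [Function.comp_apply, hin, hNconcat, inner_foldStep_sortDir_fst ha]
    exact congrArg₂ _ (hf x hx) (hg x hx)
  · rw [Function.comp_apply, hin, hNconcat, inner_foldStep_sortDir_snd hb]
    exact congrArg₂ _ (hf x hx) (hg x hx)

/-- `G_{d,ReLU}(X,ℝ)` is a lattice: it is closed under pointwise
maximum and minimum. -/
theorem stmt4 (d : ℕ) (X : Set (EuclideanSpace ℝ (Fin d)))
    (f g : EuclideanSpace ℝ (Fin d) → ℝ) (hf : InG X f) (hg : InG X g) :
    InG X (fun x => max (f x) (g x)) ∧ InG X (fun x => min (f x) (g x)) := by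
  obtain ⟨hfLip, hfNet⟩ := inG_iff.1 hf
  obtain ⟨hgLip, hgNet⟩ := inG_iff.1 hg
  obtain ⟨hmax, hmin⟩ := hfNet.max_min hgNet
  exact ⟨inG_iff.2 ⟨by simpa using hfLip.max hgLip, hmax⟩,
    inG_iff.2 ⟨by simpa using hfLip.min hgLip, hmin⟩⟩
end

section
/- Let d, k ∈ ℕ, l₁, …, l_k ∈ ℕ, and let a_{i,j} ∈ ℝ^d with ‖a_{i,j}‖₂ ≤ 1 and b_{i,j} ∈ ℝ for i = 1,…,k, j = 1,…,l_i. Define f : ℝ^d → ℝ by f(x) = max_{1≤i≤k} min_{1≤j≤l_i} (a_{i,j}ᵀ x + b_{i,j}) (the general form of a piecewise affine 1-Lipschitz function). Then there exist h, L ∈ ℕ, an affine map Q(x) = Q̂x + q̂ with Q̂ ∈ ℝ^{h×d}, q̂ ∈ ℝ^h, layers Φ₁, …, Φ_L ∈ E_{h,σ} with σ = ReLU, and v ∈ ℝ^h with ‖v‖₂ = 1, such that f(x) = vᵀ (Φ_L ∘ ⋯ ∘ Φ₁)(Q(x)) for all x ∈ ℝ^d; moreover f is 1-Lipschitz, so f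 ∈ G_{d,σ}(ℝ^d,ℝ). -/
open scoped BigOperators

/-! The comparator `x ↦ x - relu (x p - x q) • (e_p - e_q)` writes `min (x p) (x q)` to
coordinate `p` and `max (x p) (x q)` to coordinate `q`; it is a single step of `E_{h,ReLU}`
with `W = (e_p - e_q)ᵀ / √2` and `τ = 2`. Let `Q` place every affine piece
`a_{i,j}ᵀ x + b_{i,j}` in a coordinate of its own. Comparators then reduce each block
`{(i, j) | j}` to its minimum at a head coordinate and fold the maxima of the heads into one
coordinate, which `v` reads off. -/

open scoped RealInnerProductSpace

local notation "ℝ^" n:max => EuclideanSpace ℝ (Fin n)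

noncomputable section

lemma matVec_apply {m n : ℕ} (W : Matrix (Fin m) (Fin n) ℝ) (x : ℝ^n) (i : Fin m) :
    matVec W x i = ∑ j, W i j * x j := by
  simp [matVec, Matrix.toLpLin_apply, Matrix.mulVec, dotProduct]

lemma inner_eq_sum_mul {n : ℕ} (w x : ℝ^n) : ⟪w, x⟫ = ∑ i, w i * x i := by
  simp [PiLp.inner_apply, mul_comm]

lemma relu_mul_of_nonneg {c : ℝ} (hc : 0 ≤ c) (t : ℝ) : relu (c * t) = c * relu t := by
  simp only [relu, mul_max_of_nonneg _ _ hc, mul_zero]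

lemma EuclideanSpace.norm_single_sub_single {n : ℕ} {p q : Fin n} (hpq : p ≠ q) :
    ‖EuclideanSpace.single p (1 : ℝ) - EuclideanSpace.single q 1‖ = √2 := by
  rw [← Real.sqrt_sq (norm_nonneg _), norm_sub_sq_real]
  simp [EuclideanSpace.inner_single_left, hpq.symm]
  norm_num

lemma specNorm_replicateRow_le {n : ℕ} (w : ℝ^n) :
    specNorm (Matrix.replicateRow (Fin 1) (w : Fin n → ℝ)) ≤ ‖w‖ := by
  refine ContinuousLinearMap.opNorm_le_bound _ (norm_nonneg w) fun x => ?_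
  change ‖matVec _ x‖ ≤ _
  rw [EuclideanSpace.norm_eq, Fin.sum_univ_one, matVec_apply, Real.sqrt_sq_eq_abs]
  simpa [← inner_eq_sum_mul] using abs_real_inner_le_norm w x

lemma isEulerStep_rankOne {h : ℕ} {w : ℝ^h} (hw : ‖w‖ ≤ 1) (β : ℝ) {τ : ℝ} (hτ₀ : 0 ≤ τ)
    (hτ₂ : τ ≤ 2) : IsEulerStep fun x => x - (τ * relu (⟪w, x⟫ + β)) • w := by
  refine ⟨1, Matrix.replicateRow (Fin 1) w, WithLp.toLp 2 fun _ => β, τ, hτ₀, hτ₂,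
    (specNorm_replicateRow_le w).trans hw, fun x => ?_⟩
  ext r
  simp [matVec_apply, entrywise, inner_eq_sum_mul]
  ring

def comparator {h : ℕ} (p q : Fin h) (x : ℝ^h) : ℝ^h :=
  x - relu (x p - x q) • (EuclideanSpace.single p 1 - EuclideanSpace.single q 1)

section comparator

variable {h : ℕ} {p q : Fin h}

lemma comparator_apply_left (hpq : p ≠ q) (x : ℝ^h) : comparator p q x p = min (x p) (x q) := by
  simp only [comparator, PiLp.sub_apply, PiLp.smul_apply, PiLp.single_apply]
  rcases le_total (x p) (x q) with h | h <;> simp [h, hpq, relu]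

lemma comparator_apply_right (hpq : p ≠ q) (x : ℝ^h) :
    comparator p q x q = max (x p) (x q) := by
  simp only [comparator, PiLp.sub_apply, PiLp.smul_apply, PiLp.single_apply]
  rcases le_total (x p) (x q) with h | h <;> simp [h, hpq.symm, relu]

lemma comparator_apply_of_ne {r : Fin h} (hrp : r ≠ p) (hrq : r ≠ q) (x : ℝ^h) :
    comparator p q x r = x r := by
  simp [comparator, hrp, hrq]

lemma isEulerStep_comparator (hpq : p ≠ q) : IsEulerStep (comparator p q) := by
  set w : ℝ^h := (√2)⁻¹ • (EuclideanSpace.single p 1 - EuclideanSpace.single q 1)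
  have hw : ‖w‖ = 1 := by
    rw [norm_smul, EuclideanSpace.norm_single_sub_single hpq, norm_inv,
      Real.norm_of_nonneg (Real.sqrt_nonneg 2), inv_mul_cancel₀ (by positivity)]
  convert isEulerStep_rankOne hw.le 0 zero_le_two le_rfl using 2 with x
  have hinner : ⟪w, x⟫ = (√2)⁻¹ * (x p - x q) := by
    simp [w, inner_smul_left, inner_sub_left, EuclideanSpace.inner_single_left]
  have hsqrt : (2 : ℝ) * (√2)⁻¹ * (√2)⁻¹ = 1 := by
    rw [mul_assoc, ← mul_inv, Real.mul_self_sqrt zero_le_two]; norm_num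
  rw [hinner, add_zero, relu_mul_of_nonneg (by positivity), comparator, smul_smul]
  congr 2
  linear_combination (-relu (x p - x q)) * hsqrt

end comparator

lemma compChain_snoc {α : Type*} {L : ℕ} (Φ : Fin L → α → α) (φ : α → α) (x : α) :
    compChain (L + 1) (Fin.snoc Φ φ) x = φ (compChain L Φ x) := by
  simp only [compChain, Fin.snoc_last, Fin.snoc_castSucc]

inductive IsEulerNet {h : ℕ} : (ℝ^h → ℝ^h) → Prop
  | id : IsEulerNet id
  | step_comp {φ F : ℝ^h → ℝ^h} : IsEulerStep φ → IsEulerNet F → IsEulerNet (φ ∘ F)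

namespace IsEulerNet

variable {h : ℕ} {F G : ℝ^h → ℝ^h}

lemma comp (hG : IsEulerNet G) (hF : IsEulerNet F) : IsEulerNet (G ∘ F) := by
  induction hG with
  | id => exact hF
  | step_comp hφ _ ih => exact step_comp (F := _ ∘ F) hφ ih

lemma exists_compChain (hF : IsEulerNet F) :
    ∃ (L : ℕ) (Φ : Fin L → ℝ^h → ℝ^h), (∀ ℓ, IsEulerStep (Φ ℓ)) ∧ ∀ x, F x = compChain L Φ x := by
  induction hF with
  | id => exact ⟨0, Fin.elim0, fun ℓ => ℓ.elim0, fun _ => rfl⟩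
  | @step_comp φ F hφ _ ih =>
    obtain ⟨L, Φ, hΦ, hF⟩ := ih
    refine ⟨L + 1, Fin.snoc Φ φ, fun ℓ => ?_, fun x => ?_⟩
    · induction ℓ using Fin.lastCases with
      | last => simpa using hφ
      | cast ℓ => simpa using hΦ ℓ
    · rw [compChain_snoc, ← hF]; rfl

end IsEulerNet

lemma exists_eulerNet_inf' {h : ℕ} {S : Finset (Fin h)} {p : Fin h} (hp : p ∈ S) :
    ∃ F : ℝ^h → ℝ^h, IsEulerNet F ∧ ∀ x,
      F x p = S.inf' ⟨p, hp⟩ (fun r => x r) ∧ ∀ r ∉ S, F x r = x r := by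
  obtain ⟨T, hpT, rfl⟩ : ∃ T, p ∉ T ∧ S = insert p T :=
    ⟨S.erase p, Finset.notMem_erase p S, (Finset.insert_erase hp).symm⟩
  induction T using Finset.induction_on with
  | empty => exact ⟨id, .id, fun x => ⟨by simp, fun _ _ => rfl⟩⟩
  | insert q T hqT ih =>
    obtain ⟨hqp, hpT⟩ : q ≠ p ∧ p ∉ T := by simpa [eq_comm] using hpT
    obtain ⟨F, hF, hFx⟩ := ih hpT (Finset.mem_insert_self p T)
    refine ⟨comparator p q ∘ F, .step_comp (isEulerStep_comparator hqp.symm) hF,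
      fun x => ⟨?_, fun r hr => ?_⟩⟩
    · have hq : F x q = x q := (hFx x).2 q (by simp [hqp, hqT])
      rw [Function.comp_apply, comparator_apply_left hqp.symm, (hFx x).1, hq]
      simp only [Finset.insert_comm p q, Finset.inf'_insert (Finset.insert_nonempty p T)]
      exact min_comm _ _
    · simp only [Finset.mem_insert, not_or] at hr
      rw [Function.comp_apply, comparator_apply_of_ne hr.1 hr.2.1,
        (hFx x).2 r (by simp [hr.1, hr.2.2])]

lemma exists_eulerNet_sup'_inf' {h : ℕ} {ι : Type*} {S : ι → Finset (Fin h)} {p : ι → Fin h}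
    (hp : ∀ i, p i ∈ S i) (hS : Pairwise fun i j => Disjoint (S i) (S j)) {T : Finset ι} {i₀ : ι}
    (hi₀ : i₀ ∈ T) :
    ∃ F : ℝ^h → ℝ^h, IsEulerNet F ∧ ∀ x,
      F x (p i₀) = T.sup' ⟨i₀, hi₀⟩ fun i => (S i).inf' ⟨p i, hp i⟩ fun r => x r := by
  classical
  have hp_notMem {i j : ι} (hij : i ≠ j) : p i ∉ S j := Finset.disjoint_left.mp (hS hij) (hp i)
  obtain ⟨U, hi₀U, rfl⟩ : ∃ U, i₀ ∉ U ∧ T = insert i₀ U :=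
    ⟨T.erase i₀, Finset.notMem_erase i₀ T, (Finset.insert_erase hi₀).symm⟩
  suffices ∃ F : ℝ^h → ℝ^h, IsEulerNet F ∧ ∀ x,
      F x (p i₀) = (insert i₀ U).sup' (Finset.insert_nonempty i₀ U)
        (fun i => (S i).inf' ⟨p i, hp i⟩ fun r => x r) ∧
      ∀ r, (∀ i ∈ insert i₀ U, r ∉ S i) → F x r = x r by
    obtain ⟨F, hF, hFx⟩ := this
    exact ⟨F, hF, fun x => (hFx x).1⟩
  induction U using Finset.induction_on with
  | empty =>
    obtain ⟨F, hF, hFx⟩ := exists_eulerNet_inf' (hp i₀)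
    exact ⟨F, hF, fun x => ⟨by simpa using (hFx x).1, fun r hr => (hFx x).2 r (by simpa using hr)⟩⟩
  | insert j U hjU ih =>
    obtain ⟨hji₀, hi₀U⟩ : j ≠ i₀ ∧ i₀ ∉ U := by simpa [eq_comm] using hi₀U
    obtain ⟨F, hF, hFx⟩ := ih hi₀U (Finset.mem_insert_self i₀ U)
    obtain ⟨G, hG, hGx⟩ := exists_eulerNet_inf' (hp j)
    have hpj : p j ≠ p i₀ := fun he => hp_notMem hji₀.symm (he ▸ hp j)
    refine ⟨comparator (p j) (p i₀) ∘ G ∘ F,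
      .step_comp (isEulerStep_comparator hpj) (hG.comp hF), fun x => ⟨?_, fun r hr => ?_⟩⟩
    · have hFS : (S j).inf' ⟨p j, hp j⟩ (fun r => F x r) = (S j).inf' ⟨p j, hp j⟩ fun r => x r :=
        Finset.inf'_congr _ rfl fun r hr => (hFx x).2 r fun i hi hri =>
          Finset.disjoint_left.mp (hS (show j ≠ i by rintro rfl; simp_all)) hr hri
      simp only [Function.comp_apply]
      rw [comparator_apply_right hpj, (hGx (F x)).1, (hGx (F x)).2 _ (hp_notMem hji₀.symm),
        (hFx x).1, hFS]
      simp only [Finset.insert_comm i₀ j, Finset.sup'_insert (Finset.insert_nonempty i₀ U)]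
    · simp only [Finset.mem_insert, forall_eq_or_imp] at hr
      simp only [Function.comp_apply]
      rw [comparator_apply_of_ne (fun he : r = p j => hr.2.1 (he ▸ hp j))
          (fun he : r = p i₀ => hr.1 (he ▸ hp i₀)),
        (hGx (F x)).2 r hr.2.1, (hFx x).2 r (by simpa using ⟨hr.1, hr.2.2⟩)]

lemma exists_eulerNet_sup'_inf'_sigma {ι : Type*} [Fintype ι] {κ : ι → Type*}
    [∀ i, Fintype (κ i)] {h : ℕ} (e : Fin h ≃ (i : ι) × κ i) (i₀ : ι) (j₀ : (i : ι) → κ i) :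
    ∃ F : ℝ^h → ℝ^h, IsEulerNet F ∧ ∀ x, F x (e.symm ⟨i₀, j₀ i₀⟩) =
      Finset.univ.sup' ⟨i₀, Finset.mem_univ _⟩ fun i =>
        Finset.univ.inf' ⟨j₀ i, Finset.mem_univ _⟩ fun j => x (e.symm ⟨i, j⟩) := by
  let block (i : ι) : κ i ↪ Fin h := (Function.Embedding.sigmaMk i).trans e.symm.toEmbedding
  have hS : Pairwise fun i i' =>
      Disjoint (Finset.univ.map (block i)) (Finset.univ.map (block i')) :=
    fun i i' hii' => Finset.disjoint_left.mpr fun r hri hri' => by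
      simp only [Finset.mem_map, Finset.mem_univ, true_and] at hri hri'
      obtain ⟨j, rfl⟩ := hri
      obtain ⟨j', hj'⟩ := hri'
      exact hii' (congrArg Sigma.fst (e.symm.injective hj')).symm
  obtain ⟨F, hF, hFx⟩ := exists_eulerNet_sup'_inf' (p := fun i => block i (j₀ i))
    (fun i => Finset.mem_map_of_mem _ (Finset.mem_univ _)) hS (Finset.mem_univ i₀)
  exact ⟨F, hF, fun x => (hFx x).trans (Finset.sup'_congr _ rfl fun i _ => Finset.inf'_map _ _)⟩

lemma LipschitzWith.finset_sup' {α ι : Type*} [PseudoEMetricSpace α] {K : NNReal}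
    {s : Finset ι} (hs : s.Nonempty) {f : ι → α → ℝ} (hf : ∀ i ∈ s, LipschitzWith K (f i)) :
    LipschitzWith K fun x => s.sup' hs fun i => f i x := by
  simp_rw [← Finset.sup'_apply]
  exact Finset.sup'_induction (p := LipschitzWith K) hs f (fun g hg g' hg' => by
    have := hg.max hg'; rwa [max_self] at this) hf

lemma LipschitzWith.finset_inf' {α ι : Type*} [PseudoEMetricSpace α] {K : NNReal}
    {s : Finset ι} (hs : s.Nonempty) {f : ι → α → ℝ} (hf : ∀ i ∈ s, LipschitzWith K (f i)) :
    LipschitzWith K fun x => s.inf' hs fun i => f i x := by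
  simp_rw [← Finset.inf'_apply]
  exact Finset.inf'_induction (p := LipschitzWith K) hs f (fun g hg g' hg' => by
    have := hg.min hg'; rwa [max_self] at this) hf

lemma lipschitzWith_one_inner_add_const {E : Type*} [NormedAddCommGroup E]
    [InnerProductSpace ℝ E] {a : E} (ha : ‖a‖ ≤ 1) (β : ℝ) :
    LipschitzWith 1 fun x => ⟪a, x⟫ + β := by
  refine LipschitzWith.of_dist_le_mul fun x y => ?_
  rw [Real.dist_eq, add_sub_add_right_eq_sub, ← inner_sub_right, dist_eq_norm, NNReal.coe_one,
    one_mul]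
  exact (abs_real_inner_le_norm a (x - y)).trans (mul_le_of_le_one_left (norm_nonneg _) ha)

lemma inG_of_isEulerNet {d h : ℕ} {X : Set (ℝ^d)} {g : ℝ^d → ℝ} (hg : LipschitzOnWith 1 g X)
    {F : ℝ^h → ℝ^h} (hF : IsEulerNet F) (Qhat : Matrix (Fin h) (Fin d) ℝ) (qhat : ℝ^h)
    (p : Fin h) (hgF : ∀ x ∈ X, g x = F (matVec Qhat x + qhat) p) : InG X g := by
  obtain ⟨L, Φ, hΦ, hFΦ⟩ := hF.exists_compChain
  refine ⟨hg, h, L, Qhat, qhat, Φ, EuclideanSpace.single p 1, hΦ, by simp, fun x hx => ?_⟩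
  simp [hgF x hx, hFΦ]


end

/-- Every max–min combination of `1`-Lipschitz affine functions (the general
piecewise affine `1`-Lipschitz function) is `1`-Lipschitz and is represented exactly by a
network `vᵀ ∘ Φ_L ∘ ⋯ ∘ Φ₁ ∘ Q` with layers in `E_{h,ReLU}` and `‖v‖₂ = 1`, i.e. it belongs
to `G_{d,ReLU}(ℝ^d,ℝ)`. -/
theorem stmt7 (d k : ℕ) (hk : 0 < k) (l : Fin k → ℕ) (hl : ∀ i, 0 < l i)
    (a : (i : Fin k) → Fin (l i) → EuclideanSpace ℝ (Fin d))
    (b : (i : Fin k) → Fin (l i) → ℝ)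
    (ha : ∀ i j, ‖a i j‖ ≤ 1) :
    LipschitzWith 1 (fun x : EuclideanSpace ℝ (Fin d) =>
      Finset.univ.sup' ⟨⟨0, hk⟩, Finset.mem_univ _⟩ fun i =>
        Finset.univ.inf' ⟨⟨0, hl i⟩, Finset.mem_univ _⟩ fun j => (∑ t, a i j t * x t) + b i j) ∧
    InG (Set.univ : Set (EuclideanSpace ℝ (Fin d)))
      (fun x => Finset.univ.sup' ⟨⟨0, hk⟩, Finset.mem_univ _⟩ fun i =>
        Finset.univ.inf' ⟨⟨0, hl i⟩, Finset.mem_univ _⟩ fun j => (∑ t, a i j t * x t) + b i j) := by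
  refine (fun hlip => ⟨hlip, ?_⟩) (.finset_sup' _ fun i _ => .finset_inf' _ fun j _ => ?lip)
  case lip =>
    simpa only [inner_eq_sum_mul] using lipschitzWith_one_inner_add_const (ha i j) (b i j)
  obtain ⟨h, ⟨e⟩⟩ : ∃ h, Nonempty (Fin h ≃ (i : Fin k) × Fin (l i)) :=
    ⟨_, ⟨(Fintype.equivFin _).symm⟩⟩
  obtain ⟨F, hF, hFx⟩ := exists_eulerNet_sup'_inf'_sigma e ⟨0, hk⟩ fun i => ⟨0, hl i⟩
  refine inG_of_isEulerNet hlip.lipschitzOnWith hF (Matrix.of fun r t => a (e r).1 (e r).2 t)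
    (WithLp.toLp 2 fun r => b (e r).1 (e r).2) (e.symm ⟨⟨0, hk⟩, ⟨0, hl _⟩⟩) fun x _ => ?_
  rw [hFx]
  refine Finset.sup'_congr _ rfl fun i _ => Finset.inf'_congr _ rfl fun j _ => ?_
  simp only [PiLp.add_apply, matVec_apply, Matrix.of_apply]
  rw [Equiv.apply_symm_apply]
end

section
/- Let X ⊂ ℝ^d be a compact convex polytope (the convex hull of a finite set of points). Then for every 1-Lipschitz function f : X → ℝ and every ε > 0 there exists a continuous piecewise affine 1-Lipschitz function g : X → ℝ — i.e. a function of the form g(x) = max_{1≤i≤k} min_{1≤j≤l_i} (a_{i,j}ᵀ x + b_{i,j}) with all ‖a_{i,j}‖₂ ≤ 1 — such that max_{x∈X} |f(x) − g(x)| < ε. -/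
open scoped BigOperators

/-!
Approximate `f` by `g(x) = max_p min_u (f p + ⟪u, x - p⟫)`, with `p` running over a finite
`ε/2`-net of `X` and `u` over a finite net of the unit ball fine enough that
`min_u ⟪u, y⟫ ≤ -‖y‖ + η ‖y‖` for all `y`. Each inner minimum is then at most
`f p - ‖x - p‖ + η ‖x - p‖ ≤ f x + η diam X` and at least `f p - ‖x - p‖`, which for the net
point `p` nearest to `x` exceeds `f x - ε`.
-/

open scoped RealInnerProductSpace

open Finset

theorem IsCompact.exists_fin_dense {α : Type*} [PseudoMetricSpace α] {X : Set α}
    (hX : IsCompact X) (hne : X.Nonempty) {δ : ℝ} (hδ : 0 < δ) :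
    ∃ (k : ℕ) (_ : 0 < k) (p : Fin k → α), (∀ i, p i ∈ X) ∧ ∀ x ∈ X, ∃ i, dist x (p i) < δ := by
  obtain ⟨t, htX, htfin, hcover⟩ := finite_cover_balls_of_compact hX hδ
  obtain ⟨k, p, -, rfl⟩ := htfin.fin_param
  have hdense : ∀ x ∈ X, ∃ i, dist x (p i) < δ := fun x hx => by
    simpa only [Set.mem_iUnion, Set.exists_range_iff, Metric.mem_ball, exists_prop] using
      hcover hx
  obtain ⟨x, hx⟩ := hne
  obtain ⟨i, -⟩ := hdense x hx
  exact ⟨k, i.pos, p, fun i => htX ⟨i, rfl⟩, hdense⟩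

section InnerProductSpace

variable {E : Type*} [NormedAddCommGroup E] [InnerProductSpace ℝ E]

theorem neg_norm_le_inner_of_norm_le_one {u : E} (hu : ‖u‖ ≤ 1) (y : E) : -‖y‖ ≤ ⟪u, y⟫ := by
  have h := abs_real_inner_le_norm u y
  nlinarith [abs_le.1 h, norm_nonneg y]

theorem exists_fin_inner_le_neg_norm [FiniteDimensional ℝ E] {η : ℝ} (hη : 0 < η) :
    ∃ (m : ℕ) (_ : 0 < m) (u : Fin m → E), (∀ j, ‖u j‖ ≤ 1) ∧
      ∀ y, ∃ j, ⟪u j, y⟫ ≤ -‖y‖ + η * ‖y‖ := by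
  obtain ⟨m, hm, u, hu, hdense⟩ := (isCompact_closedBall (0 : E) 1).exists_fin_dense
    ⟨0, Metric.mem_closedBall_self zero_le_one⟩ hη
  refine ⟨m, hm, u, fun j => by simpa using hu j, fun y => ?_⟩
  set w : E := -(‖y‖⁻¹ • y)
  have hw : w ∈ Metric.closedBall (0 : E) 1 := by
    simpa [w, norm_smul] using inv_mul_le_one_of_le₀ le_rfl (norm_nonneg y)
  have hwy : ⟪w, y⟫ = -‖y‖ := by
    rcases eq_or_ne y 0 with rfl | hy
    · simp
    · rw [inner_neg_left, real_inner_smul_left, real_inner_self_eq_norm_sq]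
      field_simp
  obtain ⟨j, hj⟩ := hdense w hw
  refine ⟨j, ?_⟩
  calc ⟪u j, y⟫ = ⟪w, y⟫ + ⟪u j - w, y⟫ := by rw [← inner_add_left, add_sub_cancel]
    _ ≤ -‖y‖ + ‖u j - w‖ * ‖y‖ := by rw [hwy]; gcongr; exact real_inner_le_norm _ _
    _ ≤ -‖y‖ + η * ‖y‖ := by
        gcongr
        rw [← dist_eq_norm, dist_comm]
        exact hj.le

theorem LipschitzOnWith.exists_sup'_inf'_affine_approx [FiniteDimensional ℝ E] {X : Set E}
    (hX : IsCompact X) (hne : X.Nonempty) {f : E → ℝ} (hf : LipschitzOnWith 1 f X) {ε : ℝ}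
    (hε : 0 < ε) :
    ∃ (k : ℕ) (hk : 0 < k) (p : Fin k → E) (m : ℕ) (hm : 0 < m) (u : Fin m → E),
      (∀ j, ‖u j‖ ≤ 1) ∧ ∀ x ∈ X,
        |f x - univ.sup' ⟨⟨0, hk⟩, mem_univ _⟩ (fun i =>
          univ.inf' ⟨⟨0, hm⟩, mem_univ _⟩ (fun j => f (p i) + ⟪u j, x - p i⟫))| < ε := by
  obtain ⟨k, hk, p, hpX, hdense⟩ := hX.exists_fin_dense hne (half_pos hε)
  set D := Metric.diam X
  set η := ε / 2 / (D + 1)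
  have hD : 0 ≤ D := Metric.diam_nonneg
  have hηD : η * (D + 1) = ε / 2 := div_mul_cancel₀ _ (by positivity)
  obtain ⟨m, hm, u, hu, hu_min⟩ := exists_fin_inner_le_neg_norm (E := E) (η := η) (by positivity)
  refine ⟨k, hk, p, m, hm, u, hu, fun x hx => ?_⟩
  have hlip : ∀ i, |f x - f (p i)| ≤ ‖x - p i‖ := fun i => by
    simpa [Real.dist_eq, dist_eq_norm] using hf.dist_le_mul x hx (p i) (hpX i)
  set g := univ.sup' ⟨⟨0, hk⟩, mem_univ _⟩ (fun i =>
    univ.inf' ⟨⟨0, hm⟩, mem_univ _⟩ (fun j => f (p i) + ⟪u j, x - p i⟫))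
  have hupper : g < f x + ε / 2 := by
    refine (sup'_lt_iff _).2 fun i _ => ?_
    obtain ⟨j, hj⟩ := hu_min (x - p i)
    have hdiam : ‖x - p i‖ ≤ D := by
      rw [← dist_eq_norm]; exact Metric.dist_le_diam_of_mem hX.isBounded hx (hpX i)
    have hηpos : 0 < η := by positivity
    refine (inf'_le _ (mem_univ j)).trans_lt ?_
    nlinarith [abs_le.1 (hlip i)]
  have hlower : f x - ε < g := by
    obtain ⟨i, hi⟩ := hdense x hx
    rw [dist_eq_norm] at hi
    refine (lt_sup'_iff _).2 ⟨i, mem_univ _, (lt_inf'_iff _).2 fun j _ => ?_⟩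
    linarith [abs_le.1 (hlip i), neg_norm_le_inner_of_norm_le_one (hu j) (x - p i)]
  exact abs_sub_lt_iff.2 ⟨by linarith, by linarith⟩

end InnerProductSpace

theorem EuclideanSpace.inner_eq_sum_mul {d : ℕ} (u x : EuclideanSpace ℝ (Fin d)) :
    ⟪u, x⟫ = ∑ t, u t * x t := by
  simp [PiLp.inner_apply, mul_comm]

/-- On a compact convex polytope, continuous piecewise affine `1`-Lipschitz
functions (in max–min form, with all slopes of Euclidean norm at most `1`) approximate every
`1`-Lipschitz function uniformly. -/
theorem stmt8 (d : ℕ) (S : Finset (EuclideanSpace ℝ (Fin d)))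
    (f : EuclideanSpace ℝ (Fin d) → ℝ)
    (hf : LipschitzOnWith 1 f (convexHull ℝ (S : Set (EuclideanSpace ℝ (Fin d)))))
    (ε : ℝ) (hε : 0 < ε) :
    ∃ (k : ℕ) (hk : 0 < k) (l : Fin k → ℕ) (hl : ∀ i, 0 < l i)
      (a : (i : Fin k) → Fin (l i) → EuclideanSpace ℝ (Fin d))
      (b : (i : Fin k) → Fin (l i) → ℝ),
      (∀ i j, ‖a i j‖ ≤ 1) ∧
      ∀ x ∈ convexHull ℝ (S : Set (EuclideanSpace ℝ (Fin d))),
        |f x - Finset.univ.sup' ⟨⟨0, hk⟩, Finset.mem_univ _⟩ (fun i =>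
          Finset.univ.inf' ⟨⟨0, hl i⟩, Finset.mem_univ _⟩ (fun j =>
            (∑ t, a i j t * x t) + b i j))| < ε := by
  rcases S.eq_empty_or_nonempty with rfl | hS
  · exact ⟨1, one_pos, fun _ => 1, fun _ => one_pos, fun _ _ => 0, fun _ _ => 0, by simp,
      by simp⟩
  obtain ⟨k, hk, p, m, hm, u, hu, happrox⟩ := hf.exists_sup'_inf'_affine_approx
    (S.finite_toSet.isCompact_convexHull (𝕜 := ℝ))
    (convexHull_nonempty_iff.2 (coe_nonempty.2 hS)) hε
  refine ⟨k, hk, fun _ => m, fun _ => hm, fun _ j => u j, fun i j => f (p i) - ⟪u j, p i⟫,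
    fun _ => hu, fun x hx => ?_⟩
  have hpiece : ∀ i j, ∑ t, u j t * x t + (f (p i) - ⟪u j, p i⟫) = f (p i) + ⟪u j, x - p i⟫ :=
    fun i j => by rw [inner_sub_right, EuclideanSpace.inner_eq_sum_mul (u j) x]; ring
  simpa only [hpiece] using happrox x hx
end
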